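/- arXiv:2509.00901 — 4 statements merged into one kernel-verified Lean document; each statement's English description precedes it below -/
import Mathlib

section
/- For any positive definite Hermitian matrix E ∈ ℂ^{a×a}, the maximum over positive definite Hermitian matrices Q of log det(Q) − Tr(Q E) + a equals −log det(E), and the maximum is attained at Q = E⁻¹. -/
/-!
Diagonalising, `log det A ≤ tr A - n` for positive definite `A` is the scalar inequality
`log λ ≤ λ - 1` summed over the eigenvalues. Applied to `A = E^{1/2} Q E^{1/2}`, which has the
determinant and trace of `Q E`, it gives `log det Q - tr (Q E) + n ≤ -log det E`, with equality
at `Q = E⁻¹` since then `Q E = 1`.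
-/

open Matrix ComplexOrder

namespace Matrix

variable {𝕜 n : Type*} [RCLike 𝕜] [Fintype n] [DecidableEq n] {A B : Matrix n n 𝕜}

lemma IsHermitian.re_det_eq_prod_eigenvalues (hA : A.IsHermitian) :
    RCLike.re A.det = ∏ i, hA.eigenvalues i := by
  rw [hA.det_eq_prod_eigenvalues, ← RCLike.ofReal_prod, RCLike.ofReal_re]

lemma IsHermitian.re_trace_eq_sum_eigenvalues (hA : A.IsHermitian) :
    RCLike.re A.trace = ∑ i, hA.eigenvalues i := by
  rw [hA.trace_eq_sum_eigenvalues, ← RCLike.ofReal_sum, RCLike.ofReal_re]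

namespace PosDef

lemma ofReal_re_det (hA : A.PosDef) : (RCLike.re A.det : 𝕜) = A.det :=
  RCLike.conj_eq_iff_re.mp (RCLike.conj_eq_iff_im.mpr (RCLike.pos_iff.mp hA.det_pos).2)

lemma re_det_pos (hA : A.PosDef) : 0 < RCLike.re A.det :=
  (RCLike.pos_iff.mp hA.det_pos).1

lemma re_det_mul (hA : A.PosDef) (hB : B.PosDef) :
    RCLike.re (A * B).det = RCLike.re A.det * RCLike.re B.det := by
  rw [det_mul, ← hA.ofReal_re_det, ← hB.ofReal_re_det, ← RCLike.ofReal_mul, RCLike.ofReal_re,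
    RCLike.ofReal_re, RCLike.ofReal_re]

lemma re_det_inv (hA : A.PosDef) : RCLike.re A⁻¹.det = (RCLike.re A.det)⁻¹ := by
  rw [det_nonsing_inv, Ring.inverse_eq_inv', ← hA.ofReal_re_det, ← RCLike.ofReal_inv,
    RCLike.ofReal_re, RCLike.ofReal_re]

lemma log_re_det_le (hA : A.PosDef) :
    Real.log (RCLike.re A.det) ≤ RCLike.re A.trace - Fintype.card n := by
  rw [hA.isHermitian.re_det_eq_prod_eigenvalues, hA.isHermitian.re_trace_eq_sum_eigenvalues,
    Real.log_prod fun i _ => (hA.eigenvalues_pos i).ne']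
  calc ∑ i, Real.log (hA.isHermitian.eigenvalues i)
      ≤ ∑ i, (hA.isHermitian.eigenvalues i - 1) :=
        Finset.sum_le_sum fun i _ => Real.log_le_sub_one_of_pos (hA.eigenvalues_pos i)
    _ = ∑ i, hA.isHermitian.eigenvalues i - Fintype.card n := by
        simp [Finset.sum_sub_distrib]

open MatrixOrder in
lemma log_re_det_mul_le (hA : A.PosDef) (hB : B.PosDef) :
    Real.log (RCLike.re (A * B).det) ≤ RCLike.re (A * B).trace - Fintype.card n := by
  set S := CFC.sqrt B
  have hSS : S * S = B := CFC.sqrt_mul_sqrt_self B hB.posSemidef.nonneg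
  have hSstar : star S = S := (CFC.sqrt_nonneg B).isSelfAdjoint
  have hSunit : IsUnit S := (CFC.isUnit_sqrt_iff B hB.posSemidef.nonneg).mpr hB.isUnit
  have hconj : (star S * A * S).PosDef := (IsUnit.posDef_star_left_conjugate_iff hSunit).mpr hA
  have hdet : (star S * A * S).det = (A * B).det := by
    rw [hSstar, det_mul, det_mul, det_mul, ← hSS, det_mul]; ring
  have htrace : (star S * A * S).trace = (A * B).trace := by
    rw [hSstar, trace_mul_cycle, hSS, trace_mul_comm]
  simpa only [hdet, htrace] using hconj.log_re_det_le

end PosDef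

end Matrix

theorem stmt_0_general (a : ℕ) (E : Matrix (Fin a) (Fin a) ℂ) (hE : E.PosDef) :
    IsGreatest {x : ℝ | ∃ Q : Matrix (Fin a) (Fin a) ℂ, Q.PosDef ∧
        x = Real.log Q.det.re - (Q * E).trace.re + a} (-(Real.log E.det.re)) ∧
      Real.log (E⁻¹).det.re - (E⁻¹ * E).trace.re + a = -(Real.log E.det.re) := by
  have hvalue : Real.log (E⁻¹).det.re - (E⁻¹ * E).trace.re + a = -(Real.log E.det.re) := by
    rw [← RCLike.re_to_complex, hE.re_det_inv, Real.log_inv,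
      nonsing_inv_mul E ((isUnit_iff_isUnit_det E).mp hE.isUnit), trace_one]
    simp
  refine ⟨⟨⟨E⁻¹, hE.inv, hvalue.symm⟩, ?_⟩, hvalue⟩
  rintro x ⟨Q, hQ, rfl⟩
  have hle := hQ.log_re_det_mul_le hE
  rw [hQ.re_det_mul hE, Real.log_mul hQ.re_det_pos.ne' hE.re_det_pos.ne', Fintype.card_fin] at hle
  simp only [RCLike.re_to_complex] at hle
  linarith

theorem stmt_0 (a : ℕ) (ha : 1 ≤ a) (E : Matrix (Fin a) (Fin a) ℂ) (hE : E.PosDef) :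
    IsGreatest {x : ℝ | ∃ Q : Matrix (Fin a) (Fin a) ℂ, Q.PosDef ∧
        x = Real.log Q.det.re - (Q * E).trace.re + a} (-(Real.log E.det.re)) ∧
      Real.log (E⁻¹).det.re - (E⁻¹ * E).trace.re + a = -(Real.log E.det.re) :=
  stmt_0_general a E hE
end

section
/- Let H ∈ ℂ^{L×M}, W ∈ ℂ^{M×K}, and Q ∈ ℂ^{K×K} Hermitian positive definite. Define E(P, W) = (I_K − P^H H W)(I_K − P^H H W)^H + P^H P for P ∈ ℂ^{L×K}. Then the minimizer of Tr(Q E(P, W)) over P is P* = (I_L + H W W^H H^H)⁻¹ H W. -/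
/-!
Write `A = H W` and `S = I + A Aᴴ`, which is positive definite. Expanding, `E(P) = I - Pᴴ A - Aᴴ P + Pᴴ S P`,
and since `S P* = A` this completes to the square `E(P) = E(P*) + (P - P*)ᴴ S (P - P*)`.
Factoring `Q = R Rᴴ` and `S = Tᴴ T` with `R`, `T` invertible, the excess `Tr(Q (P - P*)ᴴ S (P - P*))`
equals `‖T (P - P*) R‖²_F`, which is nonnegative and vanishes only at `P = P*`.
-/

open Matrix ComplexOrder
open scoped MatrixOrder

namespace Matrix

section Algebra

variable {α m n : Type*} [Fintype m] [Fintype n]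

section Ring

variable [Ring α] [StarRing α] [DecidableEq m] [DecidableEq n]

def mseMatrix (A P : Matrix m n α) : Matrix n n α :=
  (1 - Pᴴ * A) * (1 - Pᴴ * A)ᴴ + Pᴴ * P

lemma mseMatrix_eq (A P : Matrix m n α) :
    mseMatrix A P = 1 - Pᴴ * A - Aᴴ * P + Pᴴ * (1 + A * Aᴴ) * P := by
  simp only [mseMatrix, conjTranspose_sub, conjTranspose_mul, conjTranspose_one,
    conjTranspose_conjTranspose, Matrix.sub_mul, Matrix.mul_sub, Matrix.add_mul, Matrix.mul_add,
    Matrix.one_mul, Matrix.mul_one, Matrix.mul_assoc]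
  abel

lemma mseMatrix_eq_add_of_mul_eq {A P₀ : Matrix m n α} {S : Matrix m m α}
    (hS : S = 1 + A * Aᴴ) (hP₀ : S * P₀ = A) (P : Matrix m n α) :
    mseMatrix A P = mseMatrix A P₀ + (P - P₀)ᴴ * S * (P - P₀) := by
  have hSH : Sᴴ = S := by
    rw [hS, conjTranspose_add, conjTranspose_one, conjTranspose_mul, conjTranspose_conjTranspose]
  rw [mseMatrix_eq, mseMatrix_eq, ← hS, ← hP₀]
  simp only [conjTranspose_sub, conjTranspose_mul, hSH, Matrix.sub_mul, Matrix.mul_sub,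
    Matrix.mul_assoc]
  abel

end Ring

lemma trace_mul_conjTranspose_mul_mul [CommRing α] [StarRing α]
    (R : Matrix n n α) (T : Matrix m m α) (D : Matrix m n α) :
    trace (R * Rᴴ * (Dᴴ * (Tᴴ * T) * D)) = trace ((T * D * R)ᴴ * (T * D * R)) := by
  rw [Matrix.mul_assoc, trace_mul_comm R]
  simp only [conjTranspose_mul, Matrix.mul_assoc]

end Algebra

section Trace

variable {𝕜 m n : Type*} [RCLike 𝕜] [Fintype m] [Fintype n] [DecidableEq m] [DecidableEq n]

lemma PosSemidef.trace_mul_conjTranspose_mul_mul_nonneg {Q : Matrix n n 𝕜} {S : Matrix m m 𝕜}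
    (hQ : Q.PosSemidef) (hS : S.PosSemidef) (D : Matrix m n 𝕜) :
    0 ≤ trace (Q * (Dᴴ * S * D)) := by
  obtain ⟨R, rfl⟩ := CStarAlgebra.nonneg_iff_eq_mul_star_self.mp hQ.nonneg
  obtain ⟨T, rfl⟩ := CStarAlgebra.nonneg_iff_eq_star_mul_self.mp hS.nonneg
  rw [star_eq_conjTranspose, star_eq_conjTranspose, trace_mul_conjTranspose_mul_mul]
  exact (posSemidef_conjTranspose_mul_self _).trace_nonneg

lemma PosDef.trace_mul_conjTranspose_mul_mul_eq_zero_iff {Q : Matrix n n 𝕜} {S : Matrix m m 𝕜}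
    (hQ : Q.PosDef) (hS : S.PosDef) {D : Matrix m n 𝕜} :
    trace (Q * (Dᴴ * S * D)) = 0 ↔ D = 0 := by
  obtain ⟨R, hR, rfl⟩ :=
    CStarAlgebra.isStrictlyPositive_iff_eq_mul_star_self.mp hQ.isStrictlyPositive
  obtain ⟨T, hT, rfl⟩ :=
    CStarAlgebra.isStrictlyPositive_iff_eq_star_mul_self.mp hS.isStrictlyPositive
  rw [star_eq_conjTranspose, star_eq_conjTranspose, trace_mul_conjTranspose_mul_mul,
    trace_conjTranspose_mul_self_eq_zero_iff]
  have := hR.invertible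
  have := hT.invertible
  calc T * D * R = 0 ↔ T * D * R = T * (0 : Matrix m n 𝕜) * R := by
        rw [Matrix.mul_zero, Matrix.zero_mul]
    _ ↔ D = 0 := by rw [mul_left_inj_of_invertible, mul_right_inj_of_invertible]

end Trace

end Matrix

theorem stmt_2 (L M K : ℕ) (H : Matrix (Fin L) (Fin M) ℂ) (W : Matrix (Fin M) (Fin K) ℂ)
    (Q : Matrix (Fin K) (Fin K) ℂ) (hQ : Q.PosDef)
    (Emat : Matrix (Fin L) (Fin K) ℂ → Matrix (Fin K) (Fin K) ℂ)
    (hEmat : ∀ P, Emat P = (1 - Pᴴ * H * W) * (1 - Pᴴ * H * W)ᴴ + Pᴴ * P)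
    (Pstar : Matrix (Fin L) (Fin K) ℂ)
    (hPstar : Pstar = (1 + H * W * Wᴴ * Hᴴ)⁻¹ * (H * W)) :
    (∀ P : Matrix (Fin L) (Fin K) ℂ,
        ((Q * Emat Pstar).trace).re ≤ ((Q * Emat P).trace).re) ∧
      (∀ P : Matrix (Fin L) (Fin K) ℂ,
        ((Q * Emat P).trace).re = ((Q * Emat Pstar).trace).re → P = Pstar) := by
  set A := H * W
  set S : Matrix (Fin L) (Fin L) ℂ := 1 + A * Aᴴ with hS_def
  have hS : S.PosDef := PosDef.one.add_posSemidef (posSemidef_self_mul_conjTranspose A)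
  have hSP : S * Pstar = A := by
    rw [hPstar, Matrix.mul_assoc A, ← conjTranspose_mul, ← hS_def,
      mul_nonsing_inv_cancel_left _ _ ((isUnit_iff_isUnit_det S).mp hS.isUnit)]
  have hE : ∀ P, Emat P = mseMatrix A P := fun P => by
    rw [hEmat, Matrix.mul_assoc Pᴴ, mseMatrix]
  have htrace : ∀ P, (Q * Emat P).trace =
      (Q * Emat Pstar).trace + (Q * ((P - Pstar)ᴴ * S * (P - Pstar))).trace := fun P => by
    rw [hE, hE, mseMatrix_eq_add_of_mul_eq hS_def hSP P, Matrix.mul_add, trace_add]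
  have hgap := fun P => Complex.nonneg_iff.mp
    (hQ.posSemidef.trace_mul_conjTranspose_mul_mul_nonneg hS.posSemidef (P - Pstar))
  refine ⟨fun P => ?_, fun P hP => ?_⟩
  · rw [htrace P, Complex.add_re]
    linarith [(hgap P).1]
  · rw [htrace P, Complex.add_re, add_eq_left] at hP
    have hzero : _ = (0 : ℂ) := Complex.ext_iff.mpr ⟨hP, (hgap P).2.symm⟩
    exact sub_eq_zero.mp ((hQ.trace_mul_conjTranspose_mul_mul_eq_zero_iff hS).mp hzero)
end

section
/- Let A ∈ ℂ^{M×M} be Hermitian positive semidefinite and B ∈ ℂ^{M×K}. Define g(μ) = Tr(W*(μ) W*(μ)^H) where W*(μ) = (A + μ I_M)⁻¹ B for μ > 0. Then g is monotonically non-increasing on (0, ∞). -/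
/-!
By the continuous functional calculus, `(A + μ)⁻¹ = f_μ(A)` with `f_μ x = (x + μ)⁻¹`, so
`g μ = Re tr (Bᴴ f_μ(A)² B)`. On the spectrum of `A`, which lies in `[0, ∞)`, `f_μ²` decreases
pointwise in `μ`; monotonicity of the functional calculus turns this into a decrease of `f_μ(A)²`
in the Loewner order, which survives the congruence `X ↦ Bᴴ X B` and the real part of the trace.
-/

open Matrix ComplexOrder
open scoped MatrixOrder

namespace Matrix

variable {𝕜 n m : Type*} [RCLike 𝕜] [Fintype n] [Fintype m]

theorem re_trace_conjTranspose_mul_mul_mono {X Y : Matrix n n 𝕜} (hXY : X ≤ Y)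
    (B : Matrix n m 𝕜) :
    RCLike.re (Bᴴ * X * B).trace ≤ RCLike.re (Bᴴ * Y * B).trace := by
  have h := ((le_iff.mp hXY).conjTranspose_mul_mul_same B).trace_nonneg
  rw [Matrix.mul_sub, Matrix.sub_mul, trace_sub, sub_nonneg] at h
  exact (RCLike.le_iff_re_im.mp h).1

variable [DecidableEq n]

theorem inv_add_smul_one_eq_cfc {A : Matrix n n 𝕜} (hA : A.IsHermitian) {μ : ℝ}
    (hμ : ∀ x ∈ spectrum ℝ A, x + μ ≠ 0) :
    (A + μ • (1 : Matrix n n 𝕜))⁻¹ = cfc (fun x => (x + μ)⁻¹) A := by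
  have hA' : IsSelfAdjoint A := hA
  rw [cfc_inv (fun x => x + μ) A hμ, cfc_add_const μ (fun x => x) A, cfc_id' ℝ A,
    Algebra.algebraMap_eq_smul_one, nonsing_inv_eq_ringInverse]

theorem trace_cfc_mul_mul_conjTranspose {A : Matrix n n 𝕜} (hA : A.IsHermitian) (f : ℝ → ℝ)
    (B : Matrix n m 𝕜) :
    ((cfc f A * B) * (cfc f A * B)ᴴ).trace = (Bᴴ * cfc (fun x => f x ^ 2) A * B).trace := by
  have hf : (cfc f A)ᴴ = cfc f A := (cfc_predicate f A : IsSelfAdjoint (cfc f A))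
  rw [conjTranspose_mul, hf, trace_mul_comm, ← Matrix.mul_assoc, Matrix.mul_assoc Bᴴ, ← sq]
  exact congrArg (fun X => (Bᴴ * X * B).trace)
    (cfc_pow f 2 A (A.finite_real_spectrum.continuousOn f) hA).symm

theorem cfc_inv_add_sq_antitoneOn {A : Matrix n n 𝕜} (hA : A.PosSemidef) :
    AntitoneOn (fun μ : ℝ => cfc (fun x => ((x + μ)⁻¹) ^ 2) A) (Set.Ioi 0) := by
  intro μ₁ hμ₁ μ₂ _ h12
  refine cfc_mono (fun x hx => ?_) (A.finite_real_spectrum.continuousOn _)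
    (A.finite_real_spectrum.continuousOn _)
  have hx : 0 ≤ x := spectrum_nonneg_of_nonneg hA.nonneg hx
  have h1 : 0 < x + μ₁ := by linarith [Set.mem_Ioi.mp hμ₁]
  have h2 : 0 < x + μ₂ := by linarith
  gcongr

end Matrix

theorem stmt_6 (M K : ℕ) (A : Matrix (Fin M) (Fin M) ℂ) (hA : A.PosSemidef)
    (B : Matrix (Fin M) (Fin K) ℂ)
    (g : ℝ → ℝ)
    (hg : ∀ μ : ℝ, g μ =
      ((((A + (μ : ℂ) • (1 : Matrix (Fin M) (Fin M) ℂ))⁻¹ * B)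
        * ((A + (μ : ℂ) • (1 : Matrix (Fin M) (Fin M) ℂ))⁻¹ * B)ᴴ).trace).re) :
    AntitoneOn g (Set.Ioi (0 : ℝ)) := by
  have hg_cfc : ∀ μ : ℝ, 0 < μ → g μ = (Bᴴ * cfc (fun x => ((x + μ)⁻¹) ^ 2) A * B).trace.re := by
    intro μ hμ
    have hspec : ∀ x ∈ spectrum ℝ A, x + μ ≠ 0 := fun x hx =>
      (add_pos_of_nonneg_of_pos (spectrum_nonneg_of_nonneg hA.nonneg hx) hμ).ne'
    rw [hg, Complex.coe_smul, inv_add_smul_one_eq_cfc hA.isHermitian hspec,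
      trace_cfc_mul_mul_conjTranspose hA.isHermitian]
  intro μ₁ hμ₁ μ₂ hμ₂ h12
  rw [hg_cfc μ₁ hμ₁, hg_cfc μ₂ hμ₂]
  exact re_trace_conjTranspose_mul_mul_mono (cfc_inv_add_sq_antitoneOn hA hμ₁ hμ₂ h12) B
end

section
/- For Hermitian positive semidefinite S ∈ ℂ^{n×n} and a contraction T ∈ ℂ^{m×n} (i.e., T T^H ⪯ I_m), one has det(I_m + T S T^H) ≤ det(I_n + S). -/
/-!
Write `S = R²` with `R = √S`. By Sylvester's identity `det (1 + T S Tᴴ) = det (1 + R Tᴴ T R)`.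
The contraction condition `T Tᴴ ≤ 1` is equivalent to `Tᴴ T ≤ 1`, since both say that the block
matrix `[1, T; Tᴴ, 1]` is positive semidefinite (Schur complements). Hence
`1 + R Tᴴ T R ≤ 1 + R R = 1 + S` in the Loewner order, and `det` is monotone on positive
semidefinite matrices.
-/

open Matrix ComplexOrder
open scoped MatrixOrder

namespace Matrix

variable {𝕜 m n : Type*} [RCLike 𝕜] [Fintype m] [Fintype n] [DecidableEq m] [DecidableEq n]

theorem posSemidef_one_sub_conjTranspose_mul_self_iff (T : Matrix m n 𝕜) :
    (1 - Tᴴ * T).PosSemidef ↔ (1 - T * Tᴴ).PosSemidef := by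
  have : Invertible (1 : Matrix m m 𝕜) := invertibleOne
  have : Invertible (1 : Matrix n n 𝕜) := invertibleOne
  have h₁ := PosDef.fromBlocks₁₁ T 1 (PosDef.one : (1 : Matrix m m 𝕜).PosDef)
  have h₂ := PosDef.fromBlocks₂₂ 1 T (PosDef.one : (1 : Matrix n n 𝕜).PosDef)
  simp only [inv_one, Matrix.mul_one] at h₁ h₂
  exact h₁.symm.trans h₂

theorem PosSemidef.one_le_det_one_add {C : Matrix n n 𝕜} (hC : C.PosSemidef) :
    1 ≤ (1 + C).det := by
  have hH : (1 + C).IsHermitian := isHermitian_one.add hC.1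
  rw [hH.det_eq_prod_eigenvalues]
  refine Finset.one_le_prod fun i _ => ?_
  have hv : star ⇑(hH.eigenvectorBasis i) ⬝ᵥ ⇑(hH.eigenvectorBasis i) = 1 := by
    rw [dotProduct_comm, ← EuclideanSpace.inner_eq_star_dotProduct, inner_self_eq_norm_sq_to_K,
      hH.eigenvectorBasis.orthonormal.1 i]
    simp
  have hle : 1 ≤ hH.eigenvalues i := by
    rw [hH.eigenvalues_eq, add_mulVec, one_mulVec, dotProduct_add, hv, map_add, RCLike.one_re]
    exact le_add_of_nonneg_right (hC.re_dotProduct_nonneg _)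
  exact_mod_cast hle

theorem det_le_det {A B : Matrix n n 𝕜} (hA : 0 ≤ A) (hAB : A ≤ B) : A.det ≤ B.det := by
  by_cases hdet : A.det = 0
  · exact hdet ▸ (hA.trans hAB).posSemidef.det_nonneg
  set R := CFC.sqrt A
  have hR : star R = R := (CFC.sqrt_nonneg A).isSelfAdjoint
  have hRR : R * R = A := CFC.sqrt_mul_sqrt_self A hA
  have hRunit : IsUnit R.det := by
    refine isUnit_iff_ne_zero.mpr fun h => hdet ?_
    rw [← hRR, det_mul, h, zero_mul]
  set C := R⁻¹ * (B - A) * R⁻¹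
  have hC : 0 ≤ C := by
    have := star_left_conjugate_le_conjugate (sub_nonneg.mpr hAB) R⁻¹
    rwa [star_eq_conjTranspose, conjTranspose_nonsing_inv, ← star_eq_conjTranspose, hR,
      Matrix.mul_zero, Matrix.zero_mul] at this
  have hB : B = R * (1 + C) * R := by
    simp only [C, Matrix.mul_add, Matrix.add_mul, Matrix.mul_one, hRR, ← Matrix.mul_assoc,
      mul_nonsing_inv R hRunit, Matrix.one_mul]
    rw [Matrix.mul_assoc, nonsing_inv_mul R hRunit, Matrix.mul_one, add_sub_cancel]
  calc A.det ≤ A.det * (1 + C).det :=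
        le_mul_of_one_le_right hA.posSemidef.det_nonneg hC.posSemidef.one_le_det_one_add
    _ = B.det := by rw [hB, det_mul, det_mul, ← hRR, det_mul]; ring

end Matrix

theorem stmt_19 (n m : ℕ) (S : Matrix (Fin n) (Fin n) ℂ) (hS : S.PosSemidef)
    (T : Matrix (Fin m) (Fin n) ℂ)
    (hT : ((1 : Matrix (Fin m) (Fin m) ℂ) - T * Tᴴ).PosSemidef) :
    (1 + T * S * Tᴴ).det.re ≤ (1 + S).det.re := by
  set R := CFC.sqrt S
  have hR : IsSelfAdjoint R := (CFC.sqrt_nonneg S).isSelfAdjoint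
  have hRR : R * R = S := CFC.sqrt_mul_sqrt_self S hS.nonneg
  have hsylvester : (1 + T * S * Tᴴ).det = (1 + R * (Tᴴ * T) * R).det := by
    rw [← hRR, show T * (R * R) * Tᴴ = T * R * (R * Tᴴ) by simp only [Matrix.mul_assoc],
      det_one_add_mul_comm]
    simp only [Matrix.mul_assoc]
  have hcontr : Tᴴ * T ≤ 1 := (posSemidef_one_sub_conjTranspose_mul_self_iff T).mpr hT
  have hle : 1 + R * (Tᴴ * T) * R ≤ 1 + S := by
    refine add_le_add_right ?_ 1
    simpa only [Matrix.mul_one, hRR] using hR.conjugate_le_conjugate hcontr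
  have hnonneg : 0 ≤ 1 + R * (Tᴴ * T) * R :=
    add_nonneg zero_le_one (hR.conjugate_nonneg (posSemidef_conjTranspose_mul_self T).nonneg)
  rw [hsylvester]
  exact (Complex.le_def.mp (det_le_det hnonneg hle)).1
end
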